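/- Let p ≥ 1 affine maps f_i : ℝ → ℝ of the form f_i(x) = α_i x + b_i with α_i ≥ 0, and define F(x) = (min_{1≤i≤p}(α_i x + b_i)) / (max_{1≤i≤p}(α_i(x+1) + b_i) − min_{1≤i≤p}(α_i x + b_i)). Let K_0 be a nonempty compact subset of ℝ and consider the renormalized orbit with respect to the diameter function δ, with normalizing sequence (d_n)_n. Assume the sequence (F^n(u))_n starting at u = min(H_δ(K_0)) converges to a number c ∈ ℝ. Then: (i) (d_n)_n converges to d = max_{1≤i≤p}(α_i(c+1) + b_i) − min_{1≤i≤p}(α_i c + b_i); (ii) if d > max_{1≤i≤p} α_i, then (H_δ^n(K_0))_n converges in the Hausdorff metric to the attractor L_d of the IFS {f_1/d, …, f_p/d}, whose convex hull is the interval [c, c+1]. -/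

import Mathlib

/-
Since the maps are increasing, `H(K)` has least element `min_i f_i(min K)` and greatest element
`max_i f_i(max K)`. From the first step on, every `K_n` has diameter `1`, so it lies in
`[u_n, u_n + 1]` with `u_n = min K_n`, and both ends are attained; hence `u_{n+1} = F(u_n)` and
`d_n = G(u_n)` with `G(x) = max_i f_i(x + 1) - min_i f_i(x)`. Continuity of `G` gives (i).

For (ii), continuity of `F` at `c` makes `c` a fixed point of `F`, so `c` and `c + 1` are fixed
by the contractions `x ↦ min_i f_i(x) / d` and `x ↦ max_i f_i(x) / d`; the endpoints of `L` are
fixed by the same contractions, hence equal `c` and `c + 1`. Finally `e_n = dist_H(K_n, L)`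
satisfies `e_{n+1} ≤ (max_i α_i / d) e_n + ε_n`, where `ε_n → 0` measures the error of
normalizing by `d_n` instead of `d`; this forces `e_n → 0`.
-/

open Metric Filter Pointwise Topology NNReal Function

noncomputable section

/-- The Hutchinson operator on `ℝ`: `H(K) = ⋃ i, f i '' K`. -/
def hutchR {p : ℕ} (f : Fin (p + 1) → ℝ → ℝ) (K : Set ℝ) : Set ℝ := ⋃ i, f i '' K

/-- The `δ`-renormalized Hutchinson operator `H_δ(K) = δ(H(K))⁻¹ • H(K)`, where `δ` is the
diameter. -/
def hutchDiam {p : ℕ} (f : Fin (p + 1) → ℝ → ℝ) (K : Set ℝ) : Set ℝ :=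
  (Metric.diam (hutchR f K))⁻¹ • hutchR f K

theorem tendsto_zero_of_le_mul_add {a e : ℕ → ℝ} {r : ℝ} (hr0 : 0 ≤ r) (hr1 : r < 1)
    (ha : ∀ n, 0 ≤ a n) (hrec : ∀ n, a (n + 1) ≤ r * a n + e n)
    (he : Tendsto e atTop (𝓝 0)) : Tendsto a atTop (𝓝 0) := by
  refine tendsto_order.2 ⟨fun x hx => .of_forall fun n => hx.trans_le (ha n), fun δ hδ => ?_⟩
  obtain ⟨N, hN⟩ := eventually_atTop.1 <|
    (tendsto_order.1 he).2 (δ / 2 * (1 - r)) (by nlinarith)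
  have hbound : ∀ k, a (N + k) ≤ r ^ k * a N + δ / 2 := by
    intro k
    induction k with
    | zero => simp only [add_zero, pow_zero, one_mul]; linarith
    | succ k ih =>
      calc a (N + k + 1) ≤ r * a (N + k) + e (N + k) := hrec _
        _ ≤ r * (r ^ k * a N + δ / 2) + δ / 2 * (1 - r) := by
          gcongr; exact (hN _ le_self_add).le
        _ = r ^ (k + 1) * a N + δ / 2 := by ring
  obtain ⟨M, hM⟩ := eventually_atTop.1 <|
    (tendsto_order.1 ((tendsto_pow_atTop_nhds_zero_of_lt_one hr0 hr1).mul_const (a N))).2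
      (δ / 2) (by rw [zero_mul]; exact half_pos hδ)
  refine eventually_atTop.2 ⟨N + M, fun n hn => ?_⟩
  obtain ⟨k, rfl⟩ := Nat.exists_eq_add_of_le (le_self_add.trans hn)
  linarith [hbound k, hM k (by omega)]

theorem IsCompact.convexHull_eq_Icc {s : Set ℝ} (hs : IsCompact s) (hne : s.Nonempty) :
    convexHull ℝ s = Set.Icc (sInf s) (sSup s) := by
  refine (convexHull_min hs.isBounded.subset_Icc_sInf_sSup (convex_Icc _ _)).antisymm ?_
  rw [← segment_eq_Icc (csInf_le_csSup hne hs.bddBelow hs.bddAbove)]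
  exact segment_subset_convexHull (hs.sInf_mem hne) (hs.sSup_mem hne)

section Hausdorff

variable {X : Type*}

theorem LipschitzWith.infEDist_image_le [PseudoEMetricSpace X] {f : X → X} {K : ℝ≥0}
    (hf : LipschitzWith K f) (x : X) {t : Set X} (ht : t.Nonempty) :
    infEDist (f x) (f '' t) ≤ K * infEDist x t := by
  have : Nonempty t := ht.to_subtype
  rw [infEDist, infEDist, iInf_image, iInf_subtype', iInf_subtype',
    ENNReal.mul_iInf (by simp)]
  exact iInf_mono fun y => hf.edist_le_mul x y

theorem LipschitzWith.hausdorffEDist_image_le [PseudoEMetricSpace X] {f : X → X} {K : ℝ≥0}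
    (hf : LipschitzWith K f) {s t : Set X} (hs : s.Nonempty) (ht : t.Nonempty) :
    hausdorffEDist (f '' s) (f '' t) ≤ K * hausdorffEDist s t := by
  refine hausdorffEDist_le_of_infEDist ?_ ?_ <;> rintro _ ⟨x, hx, rfl⟩
  · exact (hf.infEDist_image_le x ht).trans
      (by gcongr; exact infEDist_le_hausdorffEDist_of_mem hx)
  · rw [hausdorffEDist_comm]
    exact (hf.infEDist_image_le x hs).trans
      (by gcongr; exact infEDist_le_hausdorffEDist_of_mem hx)

theorem hausdorffDist_iUnion_image_le [PseudoMetricSpace X] {ι : Type*} {f : ι → X → X}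
    {K : ℝ≥0} (hf : ∀ i, LipschitzWith K (f i)) {s t : Set X} (hs : s.Nonempty)
    (ht : t.Nonempty) (hst : hausdorffEDist s t ≠ ⊤) :
    hausdorffDist (⋃ i, f i '' s) (⋃ i, f i '' t) ≤ K * hausdorffDist s t := by
  rw [hausdorffDist, hausdorffDist, ← ENNReal.coe_toReal, ← ENNReal.toReal_mul]
  exact ENNReal.toReal_mono (ENNReal.mul_ne_top ENNReal.coe_ne_top hst) <|
    hausdorffEDist_iUnion_le.trans <| iSup_le fun i => (hf i).hausdorffEDist_image_le hs ht

theorem hausdorffDist_smul_smul_le {𝕜 E : Type*} [NormedField 𝕜] [SeminormedAddCommGroup E]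
    [NormedSpace 𝕜 E] (a b : 𝕜) {s : Set E} {C : ℝ} (hC0 : 0 ≤ C) (hC : ∀ x ∈ s, ‖x‖ ≤ C) :
    hausdorffDist (a • s) (b • s) ≤ ‖a - b‖ * C := by
  have hdist : ∀ x ∈ s, dist (a • x) (b • x) ≤ ‖a - b‖ * C := fun x hx => by
    rw [dist_eq_norm, ← sub_smul, norm_smul]
    gcongr
    exact hC x hx
  refine hausdorffDist_le_of_mem_dist (by positivity) ?_ ?_ <;> rintro _ ⟨x, hx, rfl⟩
  · exact ⟨b • x, Set.smul_mem_smul_set hx, hdist x hx⟩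
  · exact ⟨a • x, Set.smul_mem_smul_set hx, dist_comm (a • x) _ ▸ hdist x hx⟩

end Hausdorff

theorem LipschitzWith.eq_of_isFixedPt_inv_mul {g : ℝ → ℝ} {A : ℝ≥0} (hg : LipschitzWith A g)
    {d : ℝ} (hAd : (A : ℝ) < d) {x y : ℝ} (hx : IsFixedPt (fun z => d⁻¹ * g z) x)
    (hy : IsFixedPt (fun z => d⁻¹ * g z) y) : x = y := by
  have hd : 0 < d := A.2.trans_lt hAd
  have hcontr : ‖d⁻¹‖₊ * A < 1 := by
    rw [← NNReal.coe_lt_coe, NNReal.coe_mul, coe_nnnorm, norm_inv, Real.norm_of_nonneg hd.le,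
      NNReal.coe_one, inv_mul_lt_one₀ hd]
    exact hAd
  exact ContractingWith.fixedPoint_unique' ⟨hcontr, (lipschitzWith_smul d⁻¹).comp hg⟩ hx hy

theorem lipschitzWith_mul_add (a b : ℝ) : LipschitzWith ‖a‖₊ fun x : ℝ => a * x + b :=
  LipschitzWith.of_dist_le_mul fun x y => by
    rw [Real.dist_eq, Real.dist_eq, add_sub_add_right_eq_sub, ← mul_sub, abs_mul, coe_nnnorm,
      Real.norm_eq_abs]

section AffineEnvelope

variable {ι : Type*} [Fintype ι] [Nonempty ι] (α b : ι → ℝ)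

def affineInf (x : ℝ) : ℝ := Finset.univ.inf' Finset.univ_nonempty fun i => α i * x + b i

def affineSup (x : ℝ) : ℝ := Finset.univ.sup' Finset.univ_nonempty fun i => α i * x + b i

/-- The diameter of `H(K)`, when all `α i ≥ 0`, for any compact `K` with `min K = x` and
`max K = x + 1`. -/
def affineSpread (x : ℝ) : ℝ := affineSup α b (x + 1) - affineInf α b x

def renormMin (x : ℝ) : ℝ := affineInf α b x / affineSpread α b x

variable {α} {K : ℝ≥0}

theorem lipschitzWith_affineInf (hK : ∀ i, ‖α i‖₊ ≤ K) : LipschitzWith K (affineInf α b) := by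
  have : affineInf α b = Finset.univ.inf' Finset.univ_nonempty fun i x => α i * x + b i := by
    ext x
    simp [affineInf, Finset.inf'_apply]
  rw [this]
  exact Finset.inf'_induction _ _ (fun g hg h hh => by rw [← max_self K]; exact hg.min hh)
    fun i _ => (lipschitzWith_mul_add (α i) (b i)).weaken (hK i)

theorem lipschitzWith_affineSup (hK : ∀ i, ‖α i‖₊ ≤ K) : LipschitzWith K (affineSup α b) := by
  have : affineSup α b = Finset.univ.sup' Finset.univ_nonempty fun i x => α i * x + b i := by
    ext x
    simp [affineSup, Finset.sup'_apply]
  rw [this]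
  exact Finset.sup'_induction _ _ (fun g hg h hh => by rw [← max_self K]; exact hg.max hh)
    fun i _ => (lipschitzWith_mul_add (α i) (b i)).weaken (hK i)

variable (α)

theorem continuous_affineInf : Continuous (affineInf α b) :=
  (lipschitzWith_affineInf b fun i =>
    Finset.le_sup (f := fun i => ‖α i‖₊) (Finset.mem_univ i)).continuous

theorem continuous_affineSup : Continuous (affineSup α b) :=
  (lipschitzWith_affineSup b fun i =>
    Finset.le_sup (f := fun i => ‖α i‖₊) (Finset.mem_univ i)).continuous

theorem continuous_affineSpread : Continuous (affineSpread α b) :=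
  ((continuous_affineSup α b).comp (continuous_add_const 1)).sub (continuous_affineInf α b)

theorem continuousAt_renormMin {x : ℝ} (hx : affineSpread α b x ≠ 0) :
    ContinuousAt (renormMin α b) x :=
  (continuous_affineInf α b).continuousAt.div (continuous_affineSpread α b).continuousAt hx

end AffineEnvelope

section Hutchinson

variable {p : ℕ} {f : Fin (p + 1) → ℝ → ℝ} {K : Set ℝ}

theorem isCompact_hutchR (hf : ∀ i, Continuous (f i)) (hK : IsCompact K) :
    IsCompact (hutchR f K) :=
  isCompact_iUnion fun i => hK.image (hf i)

theorem hutchR_nonempty (f : Fin (p + 1) → ℝ → ℝ) (hK : K.Nonempty) : (hutchR f K).Nonempty :=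
  Set.nonempty_iUnion.2 ⟨0, hK.image _⟩

theorem isCompact_hutchDiam (hf : ∀ i, Continuous (f i)) (hK : IsCompact K) :
    IsCompact (hutchDiam f K) :=
  (isCompact_hutchR hf hK).smul _

theorem hutchDiam_nonempty (f : Fin (p + 1) → ℝ → ℝ) (hK : K.Nonempty) :
    (hutchDiam f K).Nonempty :=
  (hutchR_nonempty f hK).smul_set

theorem isCompact_iterate_hutchDiam (hf : ∀ i, Continuous (f i)) (hK : IsCompact K) (n : ℕ) :
    IsCompact ((hutchDiam f)^[n] K) :=
  Iterate.rec _ hK (fun _ => isCompact_hutchDiam hf) n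

theorem iterate_hutchDiam_nonempty (f : Fin (p + 1) → ℝ → ℝ) (hK : K.Nonempty) (n : ℕ) :
    ((hutchDiam f)^[n] K).Nonempty :=
  Iterate.rec _ hK (fun _ => hutchDiam_nonempty f) n

theorem diam_hutchDiam (hpos : 0 < diam (hutchR f K)) : diam (hutchDiam f K) = 1 := by
  rw [hutchDiam, diam_smul₀, norm_inv, Real.norm_of_nonneg hpos.le, inv_mul_cancel₀ hpos.ne']

theorem isLeast_hutchR (hf : ∀ i, Monotone (f i)) {k : ℝ} (hk : IsLeast K k) :
    IsLeast (hutchR f K) (Finset.univ.inf' Finset.univ_nonempty fun i => f i k) := by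
  refine ⟨?_, ?_⟩
  · obtain ⟨i, -, hi⟩ := Finset.exists_mem_eq_inf' Finset.univ_nonempty fun i => f i k
    exact Set.mem_iUnion.2 ⟨i, hi ▸ Set.mem_image_of_mem _ hk.1⟩
  · rintro _ ⟨_, ⟨i, rfl⟩, x, hx, rfl⟩
    exact (Finset.inf'_le _ (Finset.mem_univ i)).trans (hf i (hk.2 hx))

theorem isGreatest_hutchR (hf : ∀ i, Monotone (f i)) {k : ℝ} (hk : IsGreatest K k) :
    IsGreatest (hutchR f K) (Finset.univ.sup' Finset.univ_nonempty fun i => f i k) := by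
  refine ⟨?_, ?_⟩
  · obtain ⟨i, -, hi⟩ := Finset.exists_mem_eq_sup' Finset.univ_nonempty fun i => f i k
    exact Set.mem_iUnion.2 ⟨i, hi ▸ Set.mem_image_of_mem _ hk.1⟩
  · rintro _ ⟨_, ⟨i, rfl⟩, x, hx, rfl⟩
    exact (hf i (hk.2 hx)).trans (Finset.le_sup' (fun i => f i k) (Finset.mem_univ i))

theorem sSup_hutchDiam (hf : ∀ i, Continuous (f i)) (hK : IsCompact K)
    (hpos : 0 < diam (hutchR f K)) : sSup (hutchDiam f K) = sInf (hutchDiam f K) + 1 := by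
  have := Real.diam_eq (isCompact_hutchDiam hf hK).isBounded
  rw [diam_hutchDiam hpos] at this
  linarith

theorem abs_le_of_mem_hutchDiam (hf : ∀ i, Continuous (f i)) (hK : IsCompact K)
    (hpos : 0 < diam (hutchR f K)) {x : ℝ} (hx : x ∈ hutchDiam f K) :
    |x| ≤ |sInf (hutchDiam f K)| + 1 := by
  have hS := isCompact_hutchDiam hf hK
  have hlow := csInf_le hS.bddBelow hx
  have hup := (le_csSup hS.bddAbove hx).trans_eq (sSup_hutchDiam hf hK hpos)
  exact abs_le.2 ⟨by linarith [neg_abs_le (sInf (hutchDiam f K))],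
    by linarith [le_abs_self (sInf (hutchDiam f K))]⟩

end Hutchinson

section AffineHutchinson

variable {p : ℕ} {α b : Fin (p + 1) → ℝ} {f : Fin (p + 1) → ℝ → ℝ} {K : Set ℝ}

theorem lipschitzWith_of_eq_mul_add (hf : ∀ i x, f i x = α i * x + b i) (i : Fin (p + 1)) :
    LipschitzWith ‖α i‖₊ (f i) := by
  rw [funext (hf i)]
  exact lipschitzWith_mul_add (α i) (b i)

theorem continuous_of_eq_mul_add (hf : ∀ i x, f i x = α i * x + b i) (i : Fin (p + 1)) :
    Continuous (f i) :=
  (lipschitzWith_of_eq_mul_add hf i).continuous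

theorem monotone_of_eq_mul_add (hα : ∀ i, 0 ≤ α i) (hf : ∀ i x, f i x = α i * x + b i)
    (i : Fin (p + 1)) : Monotone (f i) := fun x y hxy => by
  rw [hf, hf]
  exact add_le_add_left (mul_le_mul_of_nonneg_left hxy (hα i)) _

theorem sInf_hutchR (hα : ∀ i, 0 ≤ α i) (hf : ∀ i x, f i x = α i * x + b i)
    (hK : IsCompact K) (hne : K.Nonempty) : sInf (hutchR f K) = affineInf α b (sInf K) := by
  rw [(isLeast_hutchR (monotone_of_eq_mul_add hα hf) (hK.isLeast_sInf hne)).csInf_eq]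
  simp only [hf]
  rfl

theorem sSup_hutchR (hα : ∀ i, 0 ≤ α i) (hf : ∀ i x, f i x = α i * x + b i)
    (hK : IsCompact K) (hne : K.Nonempty) : sSup (hutchR f K) = affineSup α b (sSup K) := by
  rw [(isGreatest_hutchR (monotone_of_eq_mul_add hα hf) (hK.isGreatest_sSup hne)).csSup_eq]
  simp only [hf]
  rfl

theorem sInf_smul_hutchR (hα : ∀ i, 0 ≤ α i) (hf : ∀ i x, f i x = α i * x + b i)
    (hK : IsCompact K) (hne : K.Nonempty) {t : ℝ} (ht : 0 ≤ t) :
    sInf (t • hutchR f K) = t * affineInf α b (sInf K) := by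
  rw [Real.sInf_smul_of_nonneg ht, sInf_hutchR hα hf hK hne, smul_eq_mul]

theorem sSup_smul_hutchR (hα : ∀ i, 0 ≤ α i) (hf : ∀ i x, f i x = α i * x + b i)
    (hK : IsCompact K) (hne : K.Nonempty) {t : ℝ} (ht : 0 ≤ t) :
    sSup (t • hutchR f K) = t * affineSup α b (sSup K) := by
  rw [Real.sSup_smul_of_nonneg ht, sSup_hutchR hα hf hK hne, smul_eq_mul]

theorem diam_hutchR (hα : ∀ i, 0 ≤ α i) (hf : ∀ i x, f i x = α i * x + b i)
    (hK : IsCompact K) (hne : K.Nonempty) :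
    diam (hutchR f K) = affineSup α b (sSup K) - affineInf α b (sInf K) := by
  rw [Real.diam_eq (isCompact_hutchR (continuous_of_eq_mul_add hf) hK).isBounded,
    sSup_hutchR hα hf hK hne, sInf_hutchR hα hf hK hne]

theorem sInf_hutchDiam (hα : ∀ i, 0 ≤ α i) (hf : ∀ i x, f i x = α i * x + b i)
    (hK : IsCompact K) (hne : K.Nonempty) :
    sInf (hutchDiam f K) = affineInf α b (sInf K) / diam (hutchR f K) := by
  rw [hutchDiam, sInf_smul_hutchR hα hf hK hne (inv_nonneg.2 diam_nonneg), inv_mul_eq_div]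

theorem diam_hutchR_hutchDiam (hα : ∀ i, 0 ≤ α i) (hf : ∀ i x, f i x = α i * x + b i)
    (hK : IsCompact K) (hne : K.Nonempty) (hpos : 0 < diam (hutchR f K)) :
    diam (hutchR f (hutchDiam f K)) = affineSpread α b (sInf (hutchDiam f K)) := by
  have hcont := continuous_of_eq_mul_add hf
  rw [diam_hutchR hα hf (isCompact_hutchDiam hcont hK) (hutchDiam_nonempty f hne),
    sSup_hutchDiam hcont hK hpos]
  rfl

theorem sInf_hutchDiam_hutchDiam (hα : ∀ i, 0 ≤ α i) (hf : ∀ i x, f i x = α i * x + b i)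
    (hK : IsCompact K) (hne : K.Nonempty) (hpos : 0 < diam (hutchR f K)) :
    sInf (hutchDiam f (hutchDiam f K)) = renormMin α b (sInf (hutchDiam f K)) := by
  rw [sInf_hutchDiam hα hf (isCompact_hutchDiam (continuous_of_eq_mul_add hf) hK)
    (hutchDiam_nonempty f hne), diam_hutchR_hutchDiam hα hf hK hne hpos]
  rfl

theorem sInf_iterate_hutchDiam (hα : ∀ i, 0 ≤ α i) (hf : ∀ i x, f i x = α i * x + b i)
    (hK : IsCompact K) (hne : K.Nonempty)
    (hpos : ∀ n, 0 < diam (hutchR f ((hutchDiam f)^[n] K))) (n : ℕ) :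
    sInf ((hutchDiam f)^[n + 1] K) = (renormMin α b)^[n] (sInf (hutchDiam f K)) := by
  induction n with
  | zero => rfl
  | succ n ih =>
    rw [iterate_succ_apply' (renormMin α b), ← ih, iterate_succ_apply' (hutchDiam f) (n + 1),
      iterate_succ_apply' (hutchDiam f) n]
    exact sInf_hutchDiam_hutchDiam hα hf
      (isCompact_iterate_hutchDiam (continuous_of_eq_mul_add hf) hK n)
      (iterate_hutchDiam_nonempty f hne n) (hpos n)

end AffineHutchinson

section Orbit

variable {p : ℕ} {α b : Fin (p + 1) → ℝ} {f : Fin (p + 1) → ℝ → ℝ} {K : Set ℝ}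

theorem tendsto_diam_hutchR_iterate (hα : ∀ i, 0 ≤ α i) (hf : ∀ i x, f i x = α i * x + b i)
    (hK : IsCompact K) (hne : K.Nonempty)
    (hpos : ∀ n, 0 < diam (hutchR f ((hutchDiam f)^[n] K))) {c : ℝ}
    (hu : Tendsto (fun n => sInf ((hutchDiam f)^[n + 1] K)) atTop (𝓝 c)) :
    Tendsto (fun n => diam (hutchR f ((hutchDiam f)^[n] K))) atTop
      (𝓝 (affineSpread α b c)) := by
  rw [← tendsto_add_atTop_iff_nat 1]
  refine (((continuous_affineSpread α b).tendsto c).comp hu).congr fun n => ?_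
  rw [comp_apply, iterate_succ_apply', diam_hutchR_hutchDiam hα hf
    (isCompact_iterate_hutchDiam (continuous_of_eq_mul_add hf) hK n)
    (iterate_hutchDiam_nonempty f hne n) (hpos n)]

theorem hausdorffDist_hutchDiam_le {A : ℝ≥0} (hf : ∀ i, LipschitzWith A (f i))
    (hK : IsCompact K) (hne : K.Nonempty) {L : Set ℝ} (hL : IsCompact L) (hLne : L.Nonempty)
    {d : ℝ} (hd : 0 < d) (hLfix : d⁻¹ • hutchR f L = L) (hpos : 0 < diam (hutchR f K)) :
    hausdorffDist (hutchDiam f K) L ≤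
      |1 - diam (hutchR f K) / d| * (|sInf (hutchDiam f K)| + 1) +
        A / d * hausdorffDist K L := by
  have hcont i := (hf i).continuous
  set S := hutchDiam f K with hS_def
  have hS : IsCompact S := isCompact_hutchDiam hcont hK
  have hSne : S.Nonempty := hutchDiam_nonempty f hne
  have hrescale : d⁻¹ • hutchR f K = (diam (hutchR f K) / d) • S := by
    rw [hS_def, hutchDiam, smul_smul, div_mul_eq_mul_div, mul_inv_cancel₀ hpos.ne', one_div]
  have hunion (T : Set ℝ) : d⁻¹ • hutchR f T = ⋃ i, ((d⁻¹ • ·) ∘ f i) '' T := by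
    simp only [hutchR, Set.smul_set_iUnion, Set.image_comp, Set.image_smul]
  have hcontract : hausdorffDist (d⁻¹ • hutchR f K) L ≤ A / d * hausdorffDist K L := by
    have := hausdorffDist_iUnion_image_le (fun i => (lipschitzWith_smul d⁻¹).comp (hf i)) hne
      hLne (hausdorffEDist_ne_top_of_nonempty_of_bounded hne hLne hK.isBounded hL.isBounded)
    rwa [← hunion, ← hunion, hLfix, NNReal.coe_mul, coe_nnnorm, norm_inv,
      Real.norm_of_nonneg hd.le, inv_mul_eq_div] at this
  -- Pass through `d⁻¹ • H(K)`: the first leg is the error of normalizing by `diam H(K)` instead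
  -- of `d`, the second is the contraction of the IFS `{f_i / d}` that fixes `L`.
  calc hausdorffDist S L
      ≤ hausdorffDist S ((diam (hutchR f K) / d) • S) +
          hausdorffDist ((diam (hutchR f K) / d) • S) L :=
        hausdorffDist_triangle (hausdorffEDist_ne_top_of_nonempty_of_bounded hSne hSne.smul_set
          hS.isBounded (hS.smul _).isBounded)
    _ ≤ |1 - diam (hutchR f K) / d| * (|sInf S| + 1) + A / d * hausdorffDist K L := by
        gcongr ?_ + ?_
        · simpa only [one_smul, Real.norm_eq_abs] using
            hausdorffDist_smul_smul_le (1 : ℝ) (diam (hutchR f K) / d) (by positivity)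
              fun x hx => (Real.norm_eq_abs x).trans_le (abs_le_of_mem_hutchDiam hcont hK hpos hx)
        · rwa [← hrescale]

theorem tendsto_hausdorffDist_iterate_hutchDiam (hα : ∀ i, 0 ≤ α i)
    (hf : ∀ i x, f i x = α i * x + b i) {A : ℝ≥0} (hαA : ∀ i, ‖α i‖₊ ≤ A)
    (hK : IsCompact K) (hne : K.Nonempty)
    (hpos : ∀ n, 0 < diam (hutchR f ((hutchDiam f)^[n] K))) {c : ℝ}
    (hu : Tendsto (fun n => sInf ((hutchDiam f)^[n + 1] K)) atTop (𝓝 c))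
    (hAd : (A : ℝ) < affineSpread α b c) {L : Set ℝ} (hL : IsCompact L) (hLne : L.Nonempty)
    (hLfix : (affineSpread α b c)⁻¹ • hutchR f L = L) :
    Tendsto (fun n => hausdorffDist ((hutchDiam f)^[n] K) L) atTop (𝓝 0) := by
  set d := affineSpread α b c
  have hd : 0 < d := A.2.trans_lt hAd
  have hlip i : LipschitzWith A (f i) := (lipschitzWith_of_eq_mul_add hf i).weaken (hαA i)
  have herr : Tendsto (fun n => |1 - diam (hutchR f ((hutchDiam f)^[n + 1] K)) / d| *
      (|sInf ((hutchDiam f)^[n + 2] K)| + 1)) atTop (𝓝 0) := by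
    have := (tendsto_const_nhds (x := (1 : ℝ)) |>.sub
      (((tendsto_diam_hutchR_iterate hα hf hK hne hpos hu).comp
        (tendsto_add_atTop_nat 1)).div_const d)).abs.mul
      ((hu.comp (tendsto_add_atTop_nat 1)).abs.add_const 1)
    rwa [div_self hd.ne', sub_self, abs_zero, zero_mul] at this
  rw [← tendsto_add_atTop_iff_nat 1]
  refine tendsto_zero_of_le_mul_add (div_nonneg A.2 hd.le) ((div_lt_one hd).2 hAd)
    (fun n => hausdorffDist_nonneg) (fun n => ?_) herr
  rw [iterate_succ_apply' _ (n + 1), add_comm (_ * _)]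
  exact hausdorffDist_hutchDiam_le hlip
    (isCompact_iterate_hutchDiam (continuous_of_eq_mul_add hf) hK (n + 1))
    (iterate_hutchDiam_nonempty f hne (n + 1)) hL hLne hd hLfix (hpos (n + 1))

theorem convexHull_eq_Icc_of_smul_hutchR_eq (hα : ∀ i, 0 ≤ α i)
    (hf : ∀ i x, f i x = α i * x + b i) {A : ℝ≥0} (hαA : ∀ i, ‖α i‖₊ ≤ A) {c : ℝ}
    (hAd : (A : ℝ) < affineSpread α b c) (hc : IsFixedPt (renormMin α b) c) {L : Set ℝ}
    (hL : IsCompact L) (hLne : L.Nonempty) (hLfix : (affineSpread α b c)⁻¹ • hutchR f L = L) :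
    convexHull ℝ L = Set.Icc c (c + 1) := by
  set d := affineSpread α b c
  have hd : 0 < d := A.2.trans_lt hAd
  have hinf : affineInf α b c = c * d := (div_eq_iff hd.ne').1 hc
  have hsup : affineSup α b (c + 1) = (c + 1) * d := by
    have hd_eq : d = affineSup α b (c + 1) - affineInf α b c := rfl
    rw [add_mul, one_mul, ← hinf, hd_eq]
    ring
  have hInf : sInf L = c := by
    refine (lipschitzWith_affineInf b hαA).eq_of_isFixedPt_inv_mul hAd ?_ ?_
    · change d⁻¹ * affineInf α b (sInf L) = sInf L
      conv_rhs => rw [← hLfix, sInf_smul_hutchR hα hf hL hLne (inv_nonneg.2 hd.le)]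
    · change d⁻¹ * affineInf α b c = c
      rw [hinf, mul_comm, mul_inv_cancel_right₀ hd.ne']
  have hSup : sSup L = c + 1 := by
    refine (lipschitzWith_affineSup b hαA).eq_of_isFixedPt_inv_mul hAd ?_ ?_
    · change d⁻¹ * affineSup α b (sSup L) = sSup L
      conv_rhs => rw [← hLfix, sSup_smul_hutchR hα hf hL hLne (inv_nonneg.2 hd.le)]
    · change d⁻¹ * affineSup α b (c + 1) = c + 1
      rw [hsup, mul_comm, mul_inv_cancel_right₀ hd.ne']
  rw [hL.convexHull_eq_Icc hLne, hInf, hSup]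

end Orbit

/-- Proposition `prop:diamD1`. For affine maps `f_i(x) = α_i x + b_i` on `ℝ`
with `α_i ≥ 0`, let `F(x) = min_i(α_i x + b_i) / (max_i(α_i(x+1)+b_i) − min_i(α_i x + b_i))`.
If the `F`-orbit of `u = min(H_δ(K₀))` converges to `c`, then (i) the `δ`-normalizing sequence
`(d_n)` converges to `d = max_i(α_i(c+1)+b_i) − min_i(α_i c + b_i)`, and (ii) if
`d > max_i α_i` then `(H_δ^n(K₀))_n` converges to the attractor `L_d`, whose convex hull is
`[c, c+1]`. -/
theorem stmt18 {p : ℕ}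
    (α : Fin (p + 1) → ℝ) (hα : ∀ i, 0 ≤ α i) (b : Fin (p + 1) → ℝ)
    (f : Fin (p + 1) → ℝ → ℝ) (hf : ∀ i x, f i x = α i * x + b i)
    (F : ℝ → ℝ)
    (hF : ∀ x, F x = (Finset.univ.inf' Finset.univ_nonempty fun i => α i * x + b i) /
      ((Finset.univ.sup' Finset.univ_nonempty fun i => α i * (x + 1) + b i) -
        (Finset.univ.inf' Finset.univ_nonempty fun i => α i * x + b i)))
    (K₀ : Set ℝ) (hK₀c : IsCompact K₀) (hK₀ne : K₀.Nonempty)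
    (hpos : ∀ n, 0 < Metric.diam (hutchR f ((hutchDiam f)^[n] K₀)))
    (c : ℝ)
    (hc : Tendsto (fun n => F^[n] (sInf ((hutchDiam f)^[1] K₀))) atTop (𝓝 c)) :
    Tendsto (fun n => Metric.diam (hutchR f ((hutchDiam f)^[n] K₀))) atTop
      (𝓝 ((Finset.univ.sup' Finset.univ_nonempty fun i => α i * (c + 1) + b i) -
        (Finset.univ.inf' Finset.univ_nonempty fun i => α i * c + b i))) ∧
    ((Finset.univ.sup' Finset.univ_nonempty α <
        (Finset.univ.sup' Finset.univ_nonempty fun i => α i * (c + 1) + b i) -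
          (Finset.univ.inf' Finset.univ_nonempty fun i => α i * c + b i)) →
      ∀ L : Set ℝ, IsCompact L → L.Nonempty →
        ((Finset.univ.sup' Finset.univ_nonempty fun i => α i * (c + 1) + b i) -
          (Finset.univ.inf' Finset.univ_nonempty fun i => α i * c + b i))⁻¹ •
            hutchR f L = L →
        Tendsto (fun n => hausdorffDist ((hutchDiam f)^[n] K₀) L) atTop (𝓝 0) ∧
        convexHull ℝ L = Set.Icc c (c + 1)) := by
  obtain rfl : F = renormMin α b := funext hF
  have hu : Tendsto (fun n => sInf ((hutchDiam f)^[n + 1] K₀)) atTop (𝓝 c) :=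
    hc.congr fun n => (sInf_iterate_hutchDiam hα hf hK₀c hK₀ne hpos n).symm
  refine ⟨tendsto_diam_hutchR_iterate hα hf hK₀c hK₀ne hpos hu, fun hAd L hL hLne hLfix => ?_⟩
  have hA : 0 ≤ Finset.univ.sup' Finset.univ_nonempty α :=
    (hα 0).trans (Finset.le_sup' α (Finset.mem_univ 0))
  have hαA (i) : ‖α i‖₊ ≤ (⟨_, hA⟩ : ℝ≥0) := NNReal.coe_le_coe.1 <|
    (Real.norm_of_nonneg (hα i)).trans_le (Finset.le_sup' α (Finset.mem_univ i))
  have hcfix : IsFixedPt (renormMin α b) c :=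
    isFixedPt_of_tendsto_iterate hc (continuousAt_renormMin α b (hA.trans_lt hAd).ne')
  exact ⟨tendsto_hausdorffDist_iterate_hutchDiam hα hf hαA hK₀c hK₀ne hpos hu hAd hL hLne hLfix,
    convexHull_eq_Icc_of_smul_hutchR_eq hα hf hαA hAd hcfix hL hLne hLfix⟩
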